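/- arXiv:1704.04943 — 2 statements merged into one kernel-verified Lean document; each statement's English description precedes it below -/
import Mathlib

section
/- Let Y = (Y₁, Y₂, Y₃) be a centered Gaussian vector in ℝ³ with covariance matrix C₁ = [[3,0,1],[0,1,0],[1,0,3]]. Then E[ |Y₁Y₃ − Y₂²| ] = 4/√3. -/
/-!
Write `Y = T X` with `X` a standard Gaussian vector and `T` a square root of the covariance,
`C₁ = T Tᵀ`; the choice `T x = (√2 x₁ + x₃, x₂, √2 x₁ - x₃)` turns `Y₁Y₃ - Y₂²` into the
diagonal form `2X₁² - X₂² - X₃²`. Splitting `|t| = t + 2 max (-t) 0`, the linear part has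
expectation `2 - 1 - 1 = 0`, while the positive part is computed by integrating out `X₁` last:
for fixed `X₁ = u`, the radius `R² = X₂² + X₃²` has density `e^{-s/2}/2`, and
`E (R² - 2u²)⁺ = 2 e^{-u²}`. Hence `E |Y₁Y₃ - Y₂²| = 4 E e^{-X₁²} = 4/√3`.
-/

open Real MeasureTheory Set

theorem integral_comp_linearMap_of_det_ne_zero {E F : Type*} [NormedAddCommGroup E]
    [NormedSpace ℝ E] [MeasurableSpace E] [BorelSpace E] [FiniteDimensional ℝ E]
    [NormedAddCommGroup F] [NormedSpace ℝ F] (μ : Measure E) [μ.IsAddHaarMeasure]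
    {f : E →ₗ[ℝ] E} (hf : LinearMap.det f ≠ 0) (g : E → F) :
    ∫ x, g (f x) ∂μ = |(LinearMap.det f)⁻¹| • ∫ y, g y ∂μ := by
  let e := (f.equivOfDetNeZero hf).toContinuousLinearEquiv.toHomeomorph.toMeasurableEquiv
  rw [show ∫ x, g (f x) ∂μ = ∫ x, g (e x) ∂μ from rfl, ← integral_map_equiv e g]
  change ∫ y, g y ∂(Measure.map f μ) = _
  rw [Measure.map_linearMap_addHaar_eq_smul_addHaar μ hf, integral_smul_measure,
    ENNReal.toReal_ofReal (abs_nonneg _)]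

theorem integral_comp_sq_add_sq (f : ℝ → ℝ) :
    ∫ p : ℝ × ℝ, f (p.1 ^ 2 + p.2 ^ 2) = π * ∫ s in Ioi 0, f s := by
  have hpolar : ∫ p : ℝ × ℝ, f (p.1 ^ 2 + p.2 ^ 2)
      = (∫ r in Ioi 0, r * f (r ^ 2)) * ∫ _ in Ioo (-π) π, (1 : ℝ) := by
    rw [← integral_comp_polarCoord_symm, polarCoord_target, Measure.volume_eq_prod,
      ← setIntegral_prod_mul]
    refine setIntegral_congr_fun (measurableSet_Ioi.prod measurableSet_Ioo) fun q _ => ?_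
    simp only [polarCoord_symm_apply, smul_eq_mul, mul_one]
    rw [show (q.1 * cos q.2) ^ 2 + (q.1 * sin q.2) ^ 2 = q.1 ^ 2 by
      linear_combination q.1 ^ 2 * sin_sq_add_cos_sq q.2]
  have hradial : ∫ r in Ioi (0 : ℝ), r * f (r ^ 2) = (∫ s in Ioi 0, f s) / 2 := by
    rw [← integral_comp_rpow_Ioi_of_pos (g := f) two_pos, ← integral_div]
    refine setIntegral_congr_fun measurableSet_Ioi fun r _ => ?_
    rw [rpow_two, show (2 : ℝ) - 1 = 1 by norm_num, rpow_one, smul_eq_mul]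
    ring
  rw [hpolar, hradial, setIntegral_const, smul_eq_mul, mul_one,
    volume_real_Ioo_of_le (by linarith [pi_pos])]
  ring

theorem integral_Ioi_max_sub_mul_exp_neg_mul {a b : ℝ} (ha : 0 ≤ a) (hb : 0 < b) :
    ∫ s in Ioi 0, max (s - a) 0 * exp (-b * s) = exp (-b * a) / b ^ 2 := by
  have hvanish : ∫ s in Ioi 0, max (s - a) 0 * exp (-b * s)
      = ∫ s in Ioi a, max (s - a) 0 * exp (-b * s) :=
    setIntegral_eq_of_subset_of_forall_sdiff_eq_zero measurableSet_Ioi (Ioi_subset_Ioi ha)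
      fun s hs => by simp [show s ≤ a from not_lt.mp hs.2]
  have hshift := (measurePreserving_add_right volume a).setIntegral_preimage_emb
    (measurableEmbedding_addRight a) (fun s => max (s - a) 0 * exp (-b * s)) (Ioi a)
  have hpre : (· + a) ⁻¹' Ioi a = Ioi 0 := by ext; simp
  rw [hvanish, ← hshift, hpre]
  have hgamma := integral_rpow_mul_exp_neg_mul_Ioi two_pos hb
  rw [show (2 : ℝ) - 1 = 1 by norm_num, Gamma_two] at hgamma
  calc ∫ t in Ioi 0, max (t + a - a) 0 * exp (-b * (t + a))
      = exp (-b * a) * ∫ t in Ioi 0, t ^ (1 : ℝ) * exp (-(b * t)) := by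
        rw [← integral_const_mul]
        refine setIntegral_congr_fun measurableSet_Ioi fun t ht => ?_
        rw [add_sub_cancel_right, max_eq_left (le_of_lt ht), rpow_one, mul_add, exp_add]
        ring_nf
    _ = exp (-b * a) / b ^ 2 := by
        rw [hgamma, rpow_two]
        ring

theorem integral_sq_mul_exp_neg_mul_sq {b : ℝ} (hb : 0 < b) :
    ∫ x : ℝ, x ^ 2 * exp (-b * x ^ 2) = √(π / b) / (2 * b) := by
  have h := integral_rpow_mul_exp_neg_mul_rpow (p := 2) (q := 2) (by norm_num) (by norm_num) hb
  have hG : Gamma ((2 + 1) / 2) = √π / 2 := by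
    rw [show ((2 + 1) / 2 : ℝ) = 1 / 2 + 1 by norm_num, Gamma_add_one (by norm_num),
      Gamma_one_half_eq]
    ring
  have hpow : b ^ (-(2 + 1) / 2 : ℝ) = (b * √b)⁻¹ := by
    rw [show (-(2 + 1) / 2 : ℝ) = -(1 + 1 / 2) by norm_num, rpow_neg hb.le, rpow_add hb, rpow_one,
      ← sqrt_eq_rpow]
  simp only [rpow_two, hG, hpow] at h
  rw [show (fun x : ℝ => x ^ 2 * exp (-b * x ^ 2)) = fun x => |x| ^ 2 * exp (-b * |x| ^ 2) by
      simp only [sq_abs],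
    integral_comp_abs (f := fun x => x ^ 2 * exp (-b * x ^ 2)), h, sqrt_div' _ hb.le]
  have : √b ≠ 0 := by positivity
  field_simp

theorem MeasureTheory.Integrable.mul_mul_prod {α β γ : Type*} [MeasureSpace α] [MeasureSpace β]
    [MeasureSpace γ] {f : α → ℝ} {g : β → ℝ} {h : γ → ℝ} (hf : Integrable f)
    (hg : Integrable g) (hh : Integrable h) :
    Integrable (fun x : α × β × γ => f x.1 * (g x.2.1 * h x.2.2)) :=
  hf.mul_prod (hg.mul_prod hh)

theorem integral_mul_mul_prod {α β γ : Type*} [MeasureSpace α] [MeasureSpace β] [MeasureSpace γ]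
    [SFinite (volume : Measure α)] [SFinite (volume : Measure β)] [SFinite (volume : Measure γ)]
    (f : α → ℝ) (g : β → ℝ) (h : γ → ℝ) :
    ∫ x : α × β × γ, f x.1 * (g x.2.1 * h x.2.2) = (∫ a, f a) * ((∫ b, g b) * ∫ c, h c) := by
  rw [Measure.volume_eq_prod, integral_prod_mul f fun q : β × γ => g q.1 * h q.2,
    Measure.volume_eq_prod, integral_prod_mul]

section IsotropicGaussian

variable {b : ℝ}

theorem integrable_sq_mul_exp_neg_mul_sq (hb : 0 < b) :
    Integrable fun x : ℝ => x ^ 2 * exp (-b * x ^ 2) := by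
  simpa using integrable_rpow_mul_exp_neg_mul_sq hb (s := 2) (by norm_num)

theorem exp_neg_mul_sum_sq (b : ℝ) (x : ℝ × ℝ × ℝ) :
    exp (-b * (x.1 ^ 2 + x.2.1 ^ 2 + x.2.2 ^ 2))
      = exp (-b * x.1 ^ 2) * (exp (-b * x.2.1 ^ 2) * exp (-b * x.2.2 ^ 2)) := by
  rw [← exp_add, ← exp_add]
  ring_nf

theorem diag_quadratic_mul_exp_neg_mul_sum_sq_eq (b a₁ a₂ a₃ : ℝ) (x : ℝ × ℝ × ℝ) :
    (a₁ * x.1 ^ 2 + a₂ * x.2.1 ^ 2 + a₃ * x.2.2 ^ 2) * exp (-b * (x.1 ^ 2 + x.2.1 ^ 2 + x.2.2 ^ 2))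
      = a₁ * (x.1 ^ 2 * exp (-b * x.1 ^ 2) * (exp (-b * x.2.1 ^ 2) * exp (-b * x.2.2 ^ 2)))
        + a₂ * (exp (-b * x.1 ^ 2) * (x.2.1 ^ 2 * exp (-b * x.2.1 ^ 2) * exp (-b * x.2.2 ^ 2)))
        + a₃ * (exp (-b * x.1 ^ 2) *
          (exp (-b * x.2.1 ^ 2) * (x.2.2 ^ 2 * exp (-b * x.2.2 ^ 2)))) := by
  rw [exp_neg_mul_sum_sq]
  ring

theorem integrable_diag_quadratic_mul_exp_neg_mul_sum_sq (hb : 0 < b) (a₁ a₂ a₃ : ℝ) :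
    Integrable fun x : ℝ × ℝ × ℝ => (a₁ * x.1 ^ 2 + a₂ * x.2.1 ^ 2 + a₃ * x.2.2 ^ 2) *
      exp (-b * (x.1 ^ 2 + x.2.1 ^ 2 + x.2.2 ^ 2)) := by
  have he := integrable_exp_neg_mul_sq hb
  have hm := integrable_sq_mul_exp_neg_mul_sq hb
  simp_rw [diag_quadratic_mul_exp_neg_mul_sum_sq_eq]
  exact (((hm.mul_mul_prod he he).const_mul a₁).add ((he.mul_mul_prod hm he).const_mul a₂)).add
    ((he.mul_mul_prod he hm).const_mul a₃)

theorem integral_diag_quadratic_mul_exp_neg_mul_sum_sq (hb : 0 < b) (a₁ a₂ a₃ : ℝ) :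
    ∫ x : ℝ × ℝ × ℝ, (a₁ * x.1 ^ 2 + a₂ * x.2.1 ^ 2 + a₃ * x.2.2 ^ 2) *
      exp (-b * (x.1 ^ 2 + x.2.1 ^ 2 + x.2.2 ^ 2)) = (a₁ + a₂ + a₃) * (√(π / b) ^ 3 / (2 * b)) := by
  have he := integrable_exp_neg_mul_sq hb
  have hm := integrable_sq_mul_exp_neg_mul_sq hb
  simp_rw [diag_quadratic_mul_exp_neg_mul_sum_sq_eq]
  rw [integral_add ?_ ((he.mul_mul_prod he hm).const_mul a₃), integral_add
    ((hm.mul_mul_prod he he).const_mul a₁) ((he.mul_mul_prod hm he).const_mul a₂)]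
  · simp only [integral_const_mul]
    rw [integral_mul_mul_prod (fun u => u ^ 2 * exp (-b * u ^ 2)) (fun u => exp (-b * u ^ 2))
        (fun u => exp (-b * u ^ 2)),
      integral_mul_mul_prod (fun u => exp (-b * u ^ 2)) (fun u => u ^ 2 * exp (-b * u ^ 2))
        (fun u => exp (-b * u ^ 2)),
      integral_mul_mul_prod (fun u => exp (-b * u ^ 2)) (fun u => exp (-b * u ^ 2))
        (fun u => u ^ 2 * exp (-b * u ^ 2)), integral_gaussian, integral_sq_mul_exp_neg_mul_sq hb]
    ring
  · exact ((hm.mul_mul_prod he he).const_mul a₁).add ((he.mul_mul_prod hm he).const_mul a₂)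

theorem integrable_max_sq_add_sq_sub_mul_sq_mul_exp_neg_mul (hb : 0 < b) {c : ℝ} (hc : 0 ≤ c) :
    Integrable fun x : ℝ × ℝ × ℝ => max (x.2.1 ^ 2 + x.2.2 ^ 2 - c * x.1 ^ 2) 0 *
      exp (-b * (x.1 ^ 2 + x.2.1 ^ 2 + x.2.2 ^ 2)) := by
  refine (integrable_diag_quadratic_mul_exp_neg_mul_sum_sq hb 0 1 1).mono' (by fun_prop)
    (.of_forall fun x => ?_)
  rw [norm_mul, Real.norm_of_nonneg (le_max_right _ _), Real.norm_of_nonneg (exp_pos _).le]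
  gcongr
  exact max_le (by nlinarith [mul_nonneg hc (sq_nonneg x.1)]) (by positivity)

theorem integral_max_sq_add_sq_sub_mul_sq_mul_exp_neg_mul (hb : 0 < b) {c : ℝ} (hc : 0 ≤ c) :
    ∫ x : ℝ × ℝ × ℝ, max (x.2.1 ^ 2 + x.2.2 ^ 2 - c * x.1 ^ 2) 0 *
      exp (-b * (x.1 ^ 2 + x.2.1 ^ 2 + x.2.2 ^ 2)) = π / b ^ 2 * √(π / ((1 + c) * b)) := by
  have hint := integrable_max_sq_add_sq_sub_mul_sq_mul_exp_neg_mul hb hc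
  have hinner : ∀ u : ℝ, ∫ p : ℝ × ℝ, max (p.1 ^ 2 + p.2 ^ 2 - c * u ^ 2) 0 *
      exp (-b * (u ^ 2 + p.1 ^ 2 + p.2 ^ 2)) = π / b ^ 2 * exp (-((1 + c) * b) * u ^ 2) := by
    intro u
    have hsplit : ∀ p : ℝ × ℝ, max (p.1 ^ 2 + p.2 ^ 2 - c * u ^ 2) 0 *
        exp (-b * (u ^ 2 + p.1 ^ 2 + p.2 ^ 2)) = exp (-b * u ^ 2) *
          (max (p.1 ^ 2 + p.2 ^ 2 - c * u ^ 2) 0 * exp (-b * (p.1 ^ 2 + p.2 ^ 2))) := fun p => by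
      rw [mul_left_comm, ← exp_add]; ring_nf
    simp_rw [hsplit]
    rw [integral_const_mul, integral_comp_sq_add_sq (fun s => max (s - c * u ^ 2) 0 * exp (-b * s)),
      integral_Ioi_max_sub_mul_exp_neg_mul (by positivity) hb,
      show -((1 + c) * b) * u ^ 2 = -b * u ^ 2 + -b * (c * u ^ 2) by ring, exp_add]
    ring
  rw [Measure.volume_eq_prod, integral_prod _ hint]
  simp only [hinner]
  rw [integral_const_mul, integral_gaussian]

theorem integral_abs_two_mul_sq_sub_sq_sub_sq_mul_exp_neg_mul (hb : 0 < b) :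
    ∫ x : ℝ × ℝ × ℝ, |2 * x.1 ^ 2 - x.2.1 ^ 2 - x.2.2 ^ 2| *
      exp (-b * (x.1 ^ 2 + x.2.1 ^ 2 + x.2.2 ^ 2)) = 2 * π / b ^ 2 * √(π / (3 * b)) := by
  have habs : ∀ t : ℝ, |t| = t + 2 * max (-t) 0 := fun t => by
    rcases le_total 0 t with h | h
    · rw [abs_of_nonneg h, max_eq_right (by linarith)]; ring
    · rw [abs_of_nonpos h, max_eq_left (by linarith)]; ring
  have hsplit : ∀ x : ℝ × ℝ × ℝ, |2 * x.1 ^ 2 - x.2.1 ^ 2 - x.2.2 ^ 2| *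
      exp (-b * (x.1 ^ 2 + x.2.1 ^ 2 + x.2.2 ^ 2)) =
      (2 * x.1 ^ 2 + -1 * x.2.1 ^ 2 + -1 * x.2.2 ^ 2) *
        exp (-b * (x.1 ^ 2 + x.2.1 ^ 2 + x.2.2 ^ 2)) +
      2 * (max (x.2.1 ^ 2 + x.2.2 ^ 2 - 2 * x.1 ^ 2) 0 *
        exp (-b * (x.1 ^ 2 + x.2.1 ^ 2 + x.2.2 ^ 2))) := fun x => by
    rw [habs, show -(2 * x.1 ^ 2 - x.2.1 ^ 2 - x.2.2 ^ 2) = x.2.1 ^ 2 + x.2.2 ^ 2 - 2 * x.1 ^ 2 by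
      ring]
    ring
  simp_rw [hsplit]
  rw [integral_add (integrable_diag_quadratic_mul_exp_neg_mul_sum_sq hb 2 (-1) (-1))
    ((integrable_max_sq_add_sq_sub_mul_sq_mul_exp_neg_mul hb zero_le_two).const_mul 2),
    integral_diag_quadratic_mul_exp_neg_mul_sum_sq hb, integral_const_mul,
    integral_max_sq_add_sq_sub_mul_sq_mul_exp_neg_mul hb zero_le_two]
  norm_num
  ring

end IsotropicGaussian

instance : (volume : Measure (ℝ × ℝ × ℝ)).IsAddHaarMeasure :=
  inferInstanceAs ((volume : Measure ℝ).prod (volume : Measure (ℝ × ℝ))).IsAddHaarMeasure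

def prodEquivFinThree : (ℝ × ℝ × ℝ) ≃ₗ[ℝ] (Fin 3 → ℝ) where
  toFun x := ![x.1, x.2.1, x.2.2]
  invFun v := (v 0, v 1, v 2)
  map_add' x y := by ext i; fin_cases i <;> simp
  map_smul' c x := by ext i; fin_cases i <;> simp
  left_inv x := by simp
  right_inv v := by ext i; fin_cases i <;> simp

noncomputable def covFactor : (ℝ × ℝ × ℝ) →ₗ[ℝ] (ℝ × ℝ × ℝ) where
  toFun x := (√2 * x.1 + x.2.2, x.2.1, √2 * x.1 - x.2.2)
  map_add' x y := by simp only [Prod.fst_add, Prod.snd_add, Prod.mk_add_mk]; ext <;> ring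
  map_smul' c x := by
    simp only [Prod.smul_fst, Prod.smul_snd, Prod.smul_mk, smul_eq_mul, RingHom.id_apply]
    ext <;> ring

theorem det_covFactor : LinearMap.det covFactor = -(2 * √2) := by
  rw [← LinearMap.det_conj covFactor prodEquivFinThree, ← LinearMap.det_toMatrix']
  have hmat : LinearMap.toMatrix'
      ((prodEquivFinThree : (ℝ × ℝ × ℝ) →ₗ[ℝ] (Fin 3 → ℝ)) ∘ₗ covFactor ∘ₗ
        (prodEquivFinThree.symm : (Fin 3 → ℝ) →ₗ[ℝ] (ℝ × ℝ × ℝ)))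
      = !![√2, 0, 1; 0, 1, 0; √2, 0, -1] := by
    ext i j
    fin_cases i <;> fin_cases j <;> simp [LinearMap.toMatrix'_apply, prodEquivFinThree, covFactor]
  rw [hmat, Matrix.det_fin_three]
  simp only [Matrix.of_apply, Matrix.cons_val', Matrix.cons_val_zero, Matrix.cons_val_one,
    Matrix.cons_val, Matrix.cons_val_fin_one]
  ring

theorem covFactor_apply (x : ℝ × ℝ × ℝ) :
    covFactor x = (√2 * x.1 + x.2.2, x.2.1, √2 * x.1 - x.2.2) := rfl

theorem hessian_comp_covFactor (x : ℝ × ℝ × ℝ) :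
    (covFactor x).1 * (covFactor x).2.2 - (covFactor x).2.1 ^ 2
      = 2 * x.1 ^ 2 - x.2.1 ^ 2 - x.2.2 ^ 2 := by
  simp only [covFactor_apply]
  linear_combination x.1 ^ 2 * sq_sqrt (zero_le_two : (0 : ℝ) ≤ 2)

theorem precisionForm_comp_covFactor (x : ℝ × ℝ × ℝ) :
    (3 * (covFactor x).1 ^ 2 - 2 * (covFactor x).1 * (covFactor x).2.2 + 3 * (covFactor x).2.2 ^ 2)
      / 8 + (covFactor x).2.1 ^ 2 = x.1 ^ 2 + x.2.1 ^ 2 + x.2.2 ^ 2 := by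
  simp only [covFactor_apply]
  linear_combination x.1 ^ 2 / 2 * sq_sqrt (zero_le_two : (0 : ℝ) ≤ 2)

theorem integral_comp_covFactor (g : ℝ × ℝ × ℝ → ℝ) :
    ∫ y, g y = 2 * √2 * ∫ x, g (covFactor x) := by
  have hdet : LinearMap.det covFactor ≠ 0 := by rw [det_covFactor]; simp
  rw [integral_comp_linearMap_of_det_ne_zero volume hdet, det_covFactor, smul_eq_mul, ← mul_assoc,
    abs_inv, abs_neg, abs_of_pos (by positivity), mul_inv_cancel₀ (by positivity), one_mul]

/-- For a centered Gaussian vector `Y = (Y₁, Y₂, Y₃)` in `ℝ³` with covariance matrix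
`C₁ = [[3,0,1],[0,1,0],[1,0,3]]` (so `det C₁ = 8` and
`yᵗ C₁⁻¹ y = (3y₁² − 2y₁y₃ + 3y₃²)/8 + y₂²`), one has `E[|Y₁Y₃ − Y₂²|] = 4/√3`.
The expectation is written out as an integral against the explicit Gaussian density. -/
theorem abs_det_hessian_expectation :
    ∫ y : ℝ × ℝ × ℝ,
        |y.1 * y.2.2 - y.2.1 ^ 2| *
          ((2 * π) ^ (-(3 : ℝ) / 2) * (8 : ℝ) ^ (-(1 : ℝ) / 2) *
            exp (-((3 * y.1 ^ 2 - 2 * y.1 * y.2.2 + 3 * y.2.2 ^ 2) / 8 + y.2.1 ^ 2) / 2))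
      = 4 / sqrt 3 := by
  rw [integral_comp_covFactor]
  simp_rw [hessian_comp_covFactor, precisionForm_comp_covFactor,
    rpow_div_two_eq_sqrt _ (by positivity : (0 : ℝ) ≤ 2 * π),
    rpow_div_two_eq_sqrt _ (by norm_num : (0 : ℝ) ≤ 8)]
  have hexp : ∀ s : ℝ, exp (-s / 2) = exp (-(1 / 2) * s) := fun s => by ring_nf
  simp_rw [hexp, mul_left_comm _ (√(2 * π) ^ (-3 : ℝ) * √8 ^ (-1 : ℝ)), integral_const_mul,
    integral_abs_two_mul_sq_sub_sq_sub_sq_mul_exp_neg_mul (by norm_num : (0 : ℝ) < 1 / 2)]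
  rw [rpow_neg (sqrt_nonneg _), rpow_neg_one, rpow_ofNat]
  have h8 : √8 = 2 * √2 := by
    rw [show (8 : ℝ) = 2 ^ 2 * 2 by norm_num, sqrt_mul (by positivity), sqrt_sq zero_le_two]
  have hpi : √(2 * π) ^ 2 = 2 * π := sq_sqrt (by positivity)
  rw [h8, show π / (3 * (1 / 2)) = 2 * π / 3 by ring, sqrt_div' _ zero_le_three]
  field_simp
  rw [hpi]
  ring
end

section
/- Let Z₁, Z₂ be independent standard Gaussian random variables and let t ∈ ℝ. Then E[ | (Z₁ + t/2)·t − (Z₁ + t/2)² − Z₂² | ] = E[ | −Z₁² − Z₂² + t²/4 | ] = −2 + 4 e^{−t²/8} + t²/4. -/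
/-!
Completing the square turns the integrand into `|t²/4 - (Z₁² + Z₂²)|`. In polar coordinates
`Z₁² + Z₂²` has density `e^{-s/2}/2` on `(0, ∞)` (chi-squared with two degrees of freedom), and
`E|c - S|` is computed by splitting at `s = c`: on both pieces `(s + 2 - c) e^{-s/2}` is, up to
sign, an antiderivative of the integrand.
-/

open Real MeasureTheory ProbabilityTheory Set Filter Topology
open scoped NNReal

section

variable {E : Type*} [NormedAddCommGroup E] [NormedSpace ℝ E]

theorem integral_comp_sq_add_sq_s4 (g : ℝ → E) :
    ∫ z : ℝ × ℝ, g (z.1 ^ 2 + z.2 ^ 2) = π • ∫ s in Ioi 0, g s := by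
  have h_radial : ∀ p : ℝ × ℝ, p.1 • g ((polarCoord.symm p).1 ^ 2 + (polarCoord.symm p).2 ^ 2)
      = p.1 • g (p.1 ^ 2) := fun p => by
    simp only [polarCoord_symm_apply]
    rw [show (p.1 * cos p.2) ^ 2 + (p.1 * sin p.2) ^ 2 = p.1 ^ 2 by
      linear_combination p.1 ^ 2 * sin_sq_add_cos_sq p.2]
  have h_subst : (2 : ℝ) • ∫ r in Ioi (0 : ℝ), r • g (r ^ 2) = ∫ s in Ioi 0, g s := by
    rw [← integral_comp_rpow_Ioi_of_pos (g := g) two_pos, ← integral_smul]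
    refine setIntegral_congr_fun measurableSet_Ioi fun r _ => ?_
    norm_num [smul_smul]
  rw [← integral_comp_polarCoord_symm, polarCoord_target, Measure.volume_eq_prod,
    ← Measure.prod_restrict]
  simp_rw [h_radial]
  rw [integral_fun_fst (fun r => r • g (r ^ 2)), ← h_subst, smul_smul,
    measureReal_restrict_apply_univ, volume_real_Ioo_of_le (by linarith [pi_pos])]
  ring_nf

theorem integral_gaussianReal_prod_gaussianReal_eq_integral_smul {m₁ m₂ : ℝ} {v₁ v₂ : ℝ≥0}
    (h₁ : v₁ ≠ 0) (h₂ : v₂ ≠ 0) (f : ℝ × ℝ → E) :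
    ∫ z, f z ∂(gaussianReal m₁ v₁).prod (gaussianReal m₂ v₂)
      = ∫ z, (gaussianPDFReal m₁ v₁ z.1 * gaussianPDFReal m₂ v₂ z.2) • f z := by
  rw [gaussianReal_of_var_ne_zero _ h₁, gaussianReal_of_var_ne_zero _ h₂,
    prod_withDensity (measurable_gaussianPDF _ _) (measurable_gaussianPDF _ _),
    ← Measure.volume_eq_prod, integral_withDensity_eq_integral_toReal_smul
      (by fun_prop) (ae_of_all _ fun _ => ENNReal.mul_lt_top gaussianPDF_lt_top gaussianPDF_lt_top)]
  simp [gaussianPDF, ENNReal.toReal_ofReal (gaussianPDFReal_nonneg _ _ _)]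

lemma gaussianPDFReal_zero_one_mul (x y : ℝ) :
    gaussianPDFReal 0 1 x * gaussianPDFReal 0 1 y = (2 * π)⁻¹ * exp (-((x ^ 2 + y ^ 2) / 2)) := by
  simp only [gaussianPDFReal, NNReal.coe_one, mul_one, sub_zero]
  rw [mul_mul_mul_comm, ← mul_inv, mul_self_sqrt (by positivity), ← exp_add]
  ring_nf

theorem integral_comp_sq_add_sq_gaussianReal_prod (g : ℝ → E) :
    ∫ z, g (z.1 ^ 2 + z.2 ^ 2) ∂(gaussianReal 0 1).prod (gaussianReal 0 1)
      = ∫ s in Ioi 0, (exp (-(s / 2)) / 2) • g s := by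
  rw [integral_gaussianReal_prod_gaussianReal_eq_integral_smul one_ne_zero one_ne_zero]
  simp_rw [gaussianPDFReal_zero_one_mul]
  rw [integral_comp_sq_add_sq_s4 fun s => ((2 * π)⁻¹ * exp (-(s / 2))) • g s, ← integral_smul]
  refine setIntegral_congr_fun measurableSet_Ioi fun s _ => ?_
  rw [smul_smul]
  field_simp

end

lemma hasDerivAt_add_sub_mul_exp_neg_half (c x : ℝ) :
    HasDerivAt (fun s => (s + 2 - c) * exp (-(s / 2))) (exp (-(x / 2)) / 2 * (c - x)) x := by
  have hexp : HasDerivAt (fun s => exp (-(s / 2))) (exp (-(x / 2)) * -(1 / 2)) x :=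
    ((hasDerivAt_id' x).div_const 2).fun_neg.exp
  exact ((((hasDerivAt_id' x).add_const 2).sub_const c).fun_mul hexp).congr_deriv (by ring)

lemma tendsto_add_sub_mul_exp_neg_half (c : ℝ) :
    Tendsto (fun s => (s + 2 - c) * exp (-(s / 2))) atTop (𝓝 0) := by
  have h₁ := tendsto_rpow_mul_exp_neg_mul_atTop_nhds_zero 1 (1 / 2) (by norm_num)
  have h₀ := tendsto_rpow_mul_exp_neg_mul_atTop_nhds_zero 0 (1 / 2) (by norm_num)
  convert h₁.add (h₀.const_mul (2 - c)) using 1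
  · ext s; simp only [rpow_one, rpow_zero]; ring_nf
  · simp

theorem integral_Ioi_exp_neg_half_mul_abs_sub {c : ℝ} (hc : 0 ≤ c) :
    ∫ s in Ioi 0, exp (-(s / 2)) / 2 * |c - s| = c - 2 + 4 * exp (-(c / 2)) := by
  let F : ℝ → ℝ := fun s => (s + 2 - c) * exp (-(s / 2))
  have hF := hasDerivAt_add_sub_mul_exp_neg_half c
  have hF_neg : ∀ x ∈ Ici c, HasDerivAt (-F) (exp (-(x / 2)) / 2 * |c - x|) x := fun x hx => by
    rw [abs_of_nonpos (sub_nonpos.2 hx), mul_neg]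
    exact (hF x).neg
  have h_nonneg : ∀ x ∈ Ioi c, 0 ≤ exp (-(x / 2)) / 2 * |c - x| := fun x _ => by positivity
  have h_lim : Tendsto (-F) atTop (𝓝 0) :=
    neg_zero (G := ℝ) ▸ (tendsto_add_sub_mul_exp_neg_half c).neg
  rw [← intervalIntegral.integral_interval_add_Ioi'
    ((by fun_prop : Continuous _).intervalIntegrable _ _)
    (integrableOn_Ioi_deriv_of_nonneg' hF_neg h_nonneg h_lim),
    integral_Ioi_of_hasDerivAt_of_nonneg' hF_neg h_nonneg h_lim,
    intervalIntegral.integral_congr (g := fun s => exp (-(s / 2)) / 2 * (c - s)) fun x hx => by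
      rw [uIcc_of_le hc] at hx
      simp only [abs_of_nonneg (sub_nonneg.2 hx.2)],
    intervalIntegral.integral_eq_sub_of_hasDerivAt (fun x _ => hF x)
      ((by fun_prop : Continuous _).intervalIntegrable _ _)]
  simp only [F, Pi.neg_apply]
  norm_num
  ring

/-- For independent standard Gaussians `Z₁, Z₂` and any `t ∈ ℝ`,
`E[|(Z₁ + t/2)t − (Z₁ + t/2)² − Z₂²|] = E[|−Z₁² − Z₂² + t²/4|] = −2 + 4e^{−t²/8} + t²/4`. -/
theorem abs_moment_shifted_gaussians (t : ℝ) :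
    (∫ z : ℝ × ℝ, |(z.1 + t / 2) * t - (z.1 + t / 2) ^ 2 - z.2 ^ 2|
        ∂((gaussianReal 0 1).prod (gaussianReal 0 1)))
      = (∫ z : ℝ × ℝ, |-z.1 ^ 2 - z.2 ^ 2 + t ^ 2 / 4|
        ∂((gaussianReal 0 1).prod (gaussianReal 0 1))) ∧
    (∫ z : ℝ × ℝ, |-z.1 ^ 2 - z.2 ^ 2 + t ^ 2 / 4|
        ∂((gaussianReal 0 1).prod (gaussianReal 0 1)))
      = -2 + 4 * exp (-(t ^ 2 / 8)) + t ^ 2 / 4 := by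
  have h_complete_square (x y : ℝ) :
      (x + t / 2) * t - (x + t / 2) ^ 2 - y ^ 2 = t ^ 2 / 4 - (x ^ 2 + y ^ 2) := by ring
  have h_rearrange (x y : ℝ) : -x ^ 2 - y ^ 2 + t ^ 2 / 4 = t ^ 2 / 4 - (x ^ 2 + y ^ 2) := by ring
  refine ⟨by simp_rw [h_complete_square, h_rearrange], ?_⟩
  simp_rw [h_rearrange]
  rw [integral_comp_sq_add_sq_gaussianReal_prod fun s => |t ^ 2 / 4 - s|]
  simp_rw [smul_eq_mul]
  rw [integral_Ioi_exp_neg_half_mul_abs_sub (by positivity)]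
  ring_nf
end
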